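/- Let γ > 0 and let a1, a2, a3 be nonnegative, pairwise distinct real numbers. Then the minimal polynomial of the 4×4 matrix L = γ( a1 · σ1⊗σ1 + a2 · σ2ᵀ⊗σ2 + a3 · σ3⊗σ3 − (a1+a2+a3) · I₄ ) equals its characteristic polynomial, i.e. the minimal polynomial has degree 4. -/

import Mathlib

/-!
Writing `vec` for column stacking, `(B ⊗ₖ A) *ᵥ vec X = vec (A * X * Bᵀ)`, so `L` acts on
`vec X` as `γ` times the Pauli dissipator `X ↦ ∑ aₖ σₖ X σₖ - (a1 + a2 + a3) X` (the transpose
on `σ2` cancels). The Pauli matrices square to `1` and pairwise anticommute, so `1, σ1, σ2, σ3`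
are eigenvectors of the dissipator with eigenvalues `0, -2(a2 + a3), -2(a1 + a3), -2(a1 + a2)`.
For nonnegative pairwise distinct `aₖ` these four numbers are distinct, and a `4 × 4` matrix with
four distinct eigenvalues has its characteristic polynomial as minimal polynomial.
-/

open Matrix Complex Kronecker

noncomputable section

/-- The Pauli matrices. -/
def pauli1 : Matrix (Fin 2) (Fin 2) ℂ := !![0, 1; 1, 0]
def pauli2 : Matrix (Fin 2) (Fin 2) ℂ := !![0, -I; I, 0]
def pauli3 : Matrix (Fin 2) (Fin 2) ℂ := !![1, 0; 0, -1]

/-- The generator of evolution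
`L = γ( a1 σ1⊗σ1 + a2 σ2ᵀ⊗σ2 + a3 σ3⊗σ3 − (a1+a2+a3) I₄ )`. -/
def gen2 (γ a1 a2 a3 : ℝ) : Matrix (Fin 2 × Fin 2) (Fin 2 × Fin 2) ℂ :=
  (γ : ℂ) • ((a1 : ℂ) • (pauli1 ⊗ₖ pauli1) + (a2 : ℂ) • (pauli2ᵀ ⊗ₖ pauli2)
    + (a3 : ℂ) • (pauli3 ⊗ₖ pauli3)
    - ((a1 + a2 + a3 : ℝ) : ℂ) • (1 : Matrix (Fin 2 × Fin 2) (Fin 2 × Fin 2) ℂ))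

open Polynomial Module.End

theorem Matrix.hasEigenvalue_toLin'_of_mulVec_eq_smul {K n : Type*} [Field K] [Fintype n]
    [DecidableEq n] {A : Matrix n n K} {μ : K} {v : n → K} (hv : v ≠ 0) (h : A *ᵥ v = μ • v) :
    HasEigenvalue (toLin' A) μ :=
  hasEigenvalue_of_hasEigenvector ⟨mem_eigenspace_iff.mpr (by simpa using h), hv⟩

theorem Matrix.minpoly_eq_charpoly_of_injective_eigenvalues {K n ι : Type*} [Field K]
    [Fintype n] [DecidableEq n] [Fintype ι] {A : Matrix n n K} {μ : ι → K}
    (hμ : Function.Injective μ) (hcard : Fintype.card ι = Fintype.card n)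
    (heig : ∀ i, HasEigenvalue (toLin' A) (μ i)) :
    minpoly K A = A.charpoly := by
  classical
  have hroots : (Finset.univ.image μ).val ⊆ (minpoly K A).roots := fun x hx => by
    obtain ⟨i, -, rfl⟩ := Finset.mem_image.mp hx
    rw [mem_roots (minpoly.ne_zero A.isIntegral), ← minpoly_toLin', ← hasEigenvalue_iff_isRoot]
    exact heig i
  have hdeg : A.charpoly.natDegree ≤ (minpoly K A).natDegree := by
    simpa [charpoly_natDegree_eq_dim, Finset.card_image_of_injective _ hμ, hcard]
      using card_le_degree_of_subset_roots hroots
  exact (eq_of_monic_of_dvd_of_natDegree_le (minpoly.monic A.isIntegral) A.charpoly_monic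
    A.minpoly_dvd_charpoly hdeg).symm

theorem pauli1_transpose : pauli1ᵀ = pauli1 := by
  ext i j; fin_cases i <;> fin_cases j <;> rfl

theorem pauli3_transpose : pauli3ᵀ = pauli3 := by
  ext i j; fin_cases i <;> fin_cases j <;> rfl

def pauliBasis : Fin 4 → Matrix (Fin 2) (Fin 2) ℂ := ![1, pauli1, pauli2, pauli3]

theorem pauliBasis_mul_self (k : Fin 4) : pauliBasis k * pauliBasis k = 1 := by
  fin_cases k <;> ext i j <;> fin_cases i <;> fin_cases j <;>
    simp [pauliBasis, pauli1, pauli2, pauli3]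

theorem pauliBasis_ne_zero (k : Fin 4) : pauliBasis k ≠ 0 := fun h => by
  simpa [h] using pauliBasis_mul_self k

def pauliDissipator (a1 a2 a3 : ℝ) (X : Matrix (Fin 2) (Fin 2) ℂ) : Matrix (Fin 2) (Fin 2) ℂ :=
  (a1 : ℂ) • (pauli1 * X * pauli1) + (a2 : ℂ) • (pauli2 * X * pauli2)
    + (a3 : ℂ) • (pauli3 * X * pauli3) - ((a1 + a2 + a3 : ℝ) : ℂ) • X

def pauliDecayRate (a1 a2 a3 : ℝ) : Fin 4 → ℝ := ![0, a2 + a3, a1 + a3, a1 + a2]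

theorem pauliDissipator_pauliBasis (a1 a2 a3 : ℝ) (k : Fin 4) :
    pauliDissipator a1 a2 a3 (pauliBasis k)
      = ((-2 * pauliDecayRate a1 a2 a3 k : ℝ) : ℂ) • pauliBasis k := by
  fin_cases k <;> ext i j <;> fin_cases i <;> fin_cases j <;>
    simp [pauliDissipator, pauliBasis, pauliDecayRate, pauli1, pauli2, pauli3] <;> ring

theorem pauliDecayRate_injective {a1 a2 a3 : ℝ} (h1 : 0 ≤ a1) (h2 : 0 ≤ a2) (h3 : 0 ≤ a3)
    (h12 : a1 ≠ a2) (h13 : a1 ≠ a3) (h23 : a2 ≠ a3) :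
    Function.Injective (pauliDecayRate a1 a2 a3) := by
  intro k l h
  fin_cases k <;> fin_cases l <;> simp [pauliDecayRate] at h ⊢ <;> grind

theorem gen2_mulVec_vec (γ a1 a2 a3 : ℝ) (X : Matrix (Fin 2) (Fin 2) ℂ) :
    gen2 γ a1 a2 a3 *ᵥ vec X = vec ((γ : ℂ) • pauliDissipator a1 a2 a3 X) := by
  simp only [gen2, pauliDissipator, smul_mulVec, add_mulVec, sub_mulVec, kronecker_mulVec_vec,
    one_mulVec, vec_smul, vec_add, vec_sub, transpose_transpose, pauli1_transpose,
    pauli3_transpose]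

theorem gen2_mulVec_vec_pauliBasis (γ a1 a2 a3 : ℝ) (k : Fin 4) :
    gen2 γ a1 a2 a3 *ᵥ vec (pauliBasis k)
      = ((γ : ℂ) * ((-2 * pauliDecayRate a1 a2 a3 k : ℝ) : ℂ)) • vec (pauliBasis k) := by
  rw [gen2_mulVec_vec, pauliDissipator_pauliBasis, smul_smul, vec_smul]

theorem gen2_minpoly_eq_charpoly (γ a1 a2 a3 : ℝ) (hγ : 0 < γ)
    (h1 : 0 ≤ a1) (h2 : 0 ≤ a2) (h3 : 0 ≤ a3)
    (h12 : a1 ≠ a2) (h13 : a1 ≠ a3) (h23 : a2 ≠ a3) :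
    minpoly ℂ (gen2 γ a1 a2 a3) = (gen2 γ a1 a2 a3).charpoly ∧
      (minpoly ℂ (gen2 γ a1 a2 a3)).natDegree = 4 := by
  have hμ : Function.Injective
      fun k => (γ : ℂ) * ((-2 * pauliDecayRate a1 a2 a3 k : ℝ) : ℂ) :=
    (mul_right_injective₀ (ofReal_ne_zero.mpr hγ.ne')).comp <| ofReal_injective.comp <|
      (mul_right_injective₀ (by norm_num)).comp <|
        pauliDecayRate_injective h1 h2 h3 h12 h13 h23
  have heq : minpoly ℂ (gen2 γ a1 a2 a3) = (gen2 γ a1 a2 a3).charpoly :=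
    minpoly_eq_charpoly_of_injective_eigenvalues hμ rfl fun k =>
      hasEigenvalue_toLin'_of_mulVec_eq_smul (vec_eq_zero_iff.not.mpr (pauliBasis_ne_zero k))
        (gen2_mulVec_vec_pauliBasis γ a1 a2 a3 k)
  refine ⟨heq, ?_⟩
  rw [heq, charpoly_natDegree_eq_dim]
  rfl

end
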